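/- Let n ≥ 1 and let q = P_{2n} (an even Pell number). Then a(q/2 + j) = q + a(j) and b(q/2 + j) = q + b(j) for all integers j with 1 ≤ j ≤ q/2. -/

import Mathlib

/-- `a n` is the `n`-th positive integer `k` (1-indexed, in increasing order) such that
the fractional part `{k·√2}` is less than `1/2`. -/
noncomputable def a (n : ℕ) : ℕ :=
  Nat.nth (fun k => 0 < k ∧ Int.fract ((k : ℝ) * Real.sqrt 2) < 1 / 2) (n - 1)

/-- `b n` is the `n`-th positive integer `k` (1-indexed, in increasing order) such that
the fractional part `{k·√2}` is at least `1/2`. -/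
noncomputable def b (n : ℕ) : ℕ :=
  Nat.nth (fun k => 0 < k ∧ 1 / 2 ≤ Int.fract ((k : ℝ) * Real.sqrt 2)) (n - 1)

/-- The Pell numbers: `P 0 = 0`, `P 1 = 1`, `P (n+2) = 2·P (n+1) + P n`. -/
def pell : ℕ → ℕ
  | 0 => 0
  | 1 => 1
  | n + 2 => 2 * pell (n + 1) + pell n

/-!
Let `H² = 2q² + 1` (for `q = P₂ₙ`, `H = P₂ₙ₊₁ - P₂ₙ`) and `δ = H - q√2 = 1 / (H + q√2)`. Then
`{(q + k)√2} = {k√2 - δ}` and `{(q - k)√2} = 1 - δ - {k√2}`. For `0 < k ≤ q`, `|t - 2k√2| < 2δ`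
gives `|t² - 8k²| < 4`, hence `t² - 8k² = 1`, and a solution of Pell's equation within a factor `2`
of `H + q√2` is `(H, q)` itself. So apart from `{(q/2)√2} = (1 - δ)/2`, no `{k√2}` with
`0 < k ≤ q` lies within `δ` of `0` or of `1/2`: translation by `q` keeps each `k ≤ q` on its side
of `1/2`, and the reflection `k ↦ q - k` swaps the sides except at `q/2`, so each side receives
`q/2` of the integers `1, …, q`.
-/

open Finset

theorem pell_succ_sub_sq (m : ℕ) :
    ((pell (m + 1) : ℤ) - pell m) ^ 2 - 2 * (pell m : ℤ) ^ 2 = (-1) ^ m := by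
  induction m with
  | zero => simp [pell]
  | succ m ih =>
    have hrec : (pell (m + 2) : ℤ) = 2 * pell (m + 1) + pell m := by simp [pell]
    rw [hrec, pow_succ]
    linear_combination (-1 : ℤ) * ih

theorem exists_sq_eq_two_mul_pell_sq_add_one (n : ℕ) :
    ∃ H : ℕ, H ^ 2 = 2 * pell (2 * n) ^ 2 + 1 := by
  refine ⟨((pell (2 * n + 1) : ℤ) - pell (2 * n)).natAbs, ?_⟩
  have h := pell_succ_sub_sq (2 * n)
  rw [pow_mul, neg_one_sq, one_pow] at h
  zify
  rw [sq_abs]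
  linarith

theorem eq_one_of_sq_sub_two_mul_sq_eq_one {u v : ℤ} (h : u ^ 2 - 2 * v ^ 2 = 1)
    (h₁ : 1 / 2 < u + v * √2) (h₂ : u + v * √2 < 2) : u = 1 ∧ v = 0 := by
  have hs : √2 ^ 2 = 2 := Real.sq_sqrt (by norm_num)
  have hR : ((u : ℝ) + v * √2) * (u - v * √2) = 1 := by
    have : ((u ^ 2 - 2 * v ^ 2 : ℤ) : ℝ) = 1 := by exact_mod_cast h
    push_cast at this
    linear_combination this - (v : ℝ) ^ 2 * hs
  have hY₁ : 1 / 2 < (u : ℝ) - v * √2 := by nlinarith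
  have hY₂ : (u : ℝ) - v * √2 < 2 := by nlinarith
  have hv : v = 0 := by
    have hvR : (8 * v ^ 2 : ℝ) < 9 / 4 := by nlinarith
    have hvZ : v ^ 2 < 1 := by exact_mod_cast (by linarith : (v : ℝ) ^ 2 < 1)
    nlinarith [sq_nonneg v]
  subst hv
  refine ⟨?_, rfl⟩
  have hu : (0 : ℝ) < u := by simp only [Int.cast_zero, zero_mul, add_zero] at h₁; linarith
  have hu' : (0 : ℤ) < u := by exact_mod_cast hu
  nlinarith

theorem eq_of_sq_sub_two_mul_sq_eq_one {t m H q : ℤ} (hH : H ^ 2 - 2 * q ^ 2 = 1)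
    (ht : t ^ 2 - 2 * m ^ 2 = 1) (h₁ : H + q * √2 < 2 * (t + m * √2))
    (h₂ : t + m * √2 < 2 * (H + q * √2)) : t = H ∧ m = q := by
  have hs : √2 ^ 2 = 2 := Real.sq_sqrt (by norm_num)
  have hHR : ((H : ℝ) + q * √2) * (H - q * √2) = 1 := by
    have : ((H ^ 2 - 2 * q ^ 2 : ℤ) : ℝ) = 1 := by exact_mod_cast hH
    push_cast at this
    linear_combination this - (q : ℝ) ^ 2 * hs
  -- `(t + m√2) / (H + q√2) = u + v√2` is a unit of norm one in `(1/2, 2)`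
  obtain ⟨hu, hv⟩ : t * H - 2 * m * q = 1 ∧ m * H - t * q = 0 := by
    apply eq_one_of_sq_sub_two_mul_sq_eq_one
    · linear_combination (H ^ 2 - 2 * q ^ 2) * ht + hH
    all_goals
      have hX : (((t * H - 2 * m * q : ℤ) : ℝ) + ((m * H - t * q : ℤ) : ℝ) * √2)
          = (t + m * √2) * (H - q * √2) := by
        push_cast
        linear_combination (m : ℝ) * q * hs
      rw [hX]
      nlinarith
  constructor
  · linear_combination (-t) * hH + H * hu + 2 * q * hv
  · linear_combination (-m) * hH + q * hu + H * hv

theorem odd_of_sq_eq_two_mul_sq_add_one {q H : ℕ} (hqH : H ^ 2 = 2 * q ^ 2 + 1) : Odd H :=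
  (Nat.odd_pow_iff two_ne_zero).mp ⟨q ^ 2, hqH⟩

theorem even_of_sq_eq_two_mul_sq_add_one {q H : ℕ} (hqH : H ^ 2 = 2 * q ^ 2 + 1) : Even q := by
  obtain ⟨h, rfl⟩ := odd_of_sq_eq_two_mul_sq_add_one hqH
  exact (Nat.even_pow' two_ne_zero).mp ⟨h * (h + 1), by ring_nf at hqH ⊢; omega⟩

noncomputable def pellGap (q H : ℕ) : ℝ := H - q * √2

section PellGap

variable {q H : ℕ}

theorem pellGap_mul_add (hqH : H ^ 2 = 2 * q ^ 2 + 1) :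
    pellGap q H * (H + q * √2) = 1 := by
  have hs : √2 ^ 2 = 2 := Real.sq_sqrt (by norm_num)
  have hR : (H : ℝ) ^ 2 = 2 * q ^ 2 + 1 := by exact_mod_cast hqH
  unfold pellGap
  linear_combination hR - (q : ℝ) ^ 2 * hs

theorem add_mul_sqrt_two_eq (q H : ℕ) : (H : ℝ) + q * √2 = 2 * q * √2 + pellGap q H := by
  unfold pellGap; ring

theorem pellGap_pos (hqH : H ^ 2 = 2 * q ^ 2 + 1) : 0 < pellGap q H := by
  have hH : (1 : ℝ) ≤ H := by exact_mod_cast (show 1 ≤ H by nlinarith)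
  have : 0 ≤ (q : ℝ) * √2 := by positivity
  exact pos_of_mul_pos_left (by rw [pellGap_mul_add hqH]; exact one_pos) (by linarith)

theorem pellGap_lt_third (hqH : H ^ 2 = 2 * q ^ 2 + 1) (hq : 0 < q) : pellGap q H < 1 / 3 := by
  have hδ := pellGap_mul_add hqH
  have hδ₀ := pellGap_pos hqH
  have hH : (2 : ℝ) ≤ H := by exact_mod_cast (show 2 ≤ H by nlinarith)
  have hq₁ : (1 : ℝ) ≤ q := by exact_mod_cast hq
  have hα : 3 < (H : ℝ) + q * √2 := by nlinarith [Real.one_lt_sqrt_two]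
  by_contra! h
  nlinarith [mul_le_mul_of_nonneg_right h (by linarith : (0 : ℝ) ≤ H + q * √2)]

theorem sq_sub_eight_mul_sq_eq_one (hqH : H ^ 2 = 2 * q ^ 2 + 1) {t : ℤ} {k : ℕ} (hk : 0 < k)
    (hkq : k ≤ q) (h : |t - 2 * k * √2| < 2 * pellGap q H) : t ^ 2 - 8 * k ^ 2 = 1 := by
  have hs : √2 ^ 2 = 2 := Real.sq_sqrt (by norm_num)
  have hδ := pellGap_mul_add hqH
  have hδ₃ := pellGap_lt_third hqH (hk.trans_le hkq)
  have hk₁ : (1 : ℝ) ≤ k := by exact_mod_cast hk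
  have hkq' : (k : ℝ) ≤ q := by exact_mod_cast hkq
  obtain ⟨hε₁, hε₂⟩ := abs_lt.mp h
  have hN : ((t ^ 2 - 8 * k ^ 2 : ℤ) : ℝ) = (t - 2 * k * √2) * (t - 2 * k * √2 + 4 * k * √2) := by
    push_cast
    linear_combination 4 * (k : ℝ) ^ 2 * hs
  have hpos : 0 < (t : ℝ) - 2 * k * √2 + 4 * k * √2 := by nlinarith [Real.one_lt_sqrt_two]
  have hN₄ : |((t ^ 2 - 8 * k ^ 2 : ℤ) : ℝ)| < 4 := by
    rw [hN, abs_mul, abs_of_pos hpos]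
    calc |(t : ℝ) - 2 * k * √2| * (t - 2 * k * √2 + 4 * k * √2)
        < 2 * pellGap q H * (2 * pellGap q H + 4 * q * √2) :=
          mul_lt_mul'' h (by nlinarith [Real.sqrt_nonneg 2]) (abs_nonneg _) hpos.le
      _ = 4 := by linear_combination 4 * hδ - 4 * pellGap q H * add_mul_sqrt_two_eq q H
  have hN₄' : |t ^ 2 - 8 * (k : ℤ) ^ 2| < 4 := by exact_mod_cast hN₄
  obtain ⟨hN₁, hN₂⟩ := abs_lt.mp hN₄'
  -- `t² ≡ 0, 4 (mod 8)` for even `t` and `t² ≡ 1` for odd `t`; `t² = 8k²` contradicts `√2 ∉ ℚ`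
  obtain ⟨s, rfl | rfl⟩ := Int.even_or_odd' t
  · have hN₀ : (2 * s) ^ 2 - 8 * (k : ℤ) ^ 2 = 0 := by
      rw [show (2 * s) ^ 2 = 4 * s ^ 2 by ring] at hN₁ hN₂ ⊢
      omega
    rw [hN₀, Int.cast_zero, eq_comm, mul_eq_zero, or_iff_left hpos.ne', sub_eq_zero] at hN
    push_cast at hN
    exact absurd (by push_cast; linarith) <|
      (irrational_sqrt_two.natCast_mul (m := 2 * k) (by omega)).ne_int (2 * s)
  · obtain ⟨e, he⟩ := Int.even_mul_succ_self s
    rw [show (2 * s + 1) ^ 2 = 4 * (s * (s + 1)) + 1 by ring] at hN₁ hN₂ ⊢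
    omega

theorem eq_of_abs_sub_lt_two_mul_pellGap (hqH : H ^ 2 = 2 * q ^ 2 + 1) {t : ℤ} {k : ℕ}
    (hk : 0 < k) (hkq : k ≤ q) (h : |t - 2 * k * √2| < 2 * pellGap q H) :
    t = H ∧ 2 * k = q := by
  have hs : √2 ^ 2 = 2 := Real.sq_sqrt (by norm_num)
  have hδ := pellGap_mul_add hqH
  have hδ₀ := pellGap_pos hqH
  have hkq' : (k : ℝ) ≤ q := by exact_mod_cast hkq
  have hN := sq_sub_eight_mul_sq_eq_one hqH hk hkq h
  have hβ : ((t : ℝ) - 2 * k * √2) * (t + 2 * k * √2) = 1 := by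
    have : ((t ^ 2 - 8 * k ^ 2 : ℤ) : ℝ) = 1 := by exact_mod_cast hN
    push_cast at this
    linear_combination this - 4 * (k : ℝ) ^ 2 * hs
  obtain ⟨hε₁, hε₂⟩ := abs_lt.mp h
  have hα := add_mul_sqrt_two_eq q H
  have hβ₀ : 0 < (t : ℝ) + 2 * k * √2 := by
    have : (1 : ℝ) ≤ k := by exact_mod_cast hk
    nlinarith [Real.one_lt_sqrt_two, pellGap_lt_third hqH (hk.trans_le hkq)]
  obtain ⟨htH, hkq₂⟩ := eq_of_sq_sub_two_mul_sq_eq_one (t := t) (m := 2 * k) (H := H) (q := q)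
    (by have : (H : ℤ) ^ 2 = 2 * q ^ 2 + 1 := by exact_mod_cast hqH
        linarith)
    (by linear_combination hN)
    (by push_cast; nlinarith [mul_lt_mul_of_pos_right hε₂ hβ₀])
    (by push_cast; rw [hα]; nlinarith [Real.sqrt_nonneg 2])
  exact ⟨htH, by exact_mod_cast hkq₂⟩

theorem two_mul_fract_eq_of_abs_sub_lt (hqH : H ^ 2 = 2 * q ^ 2 + 1) {k : ℕ} (hk : 0 < k)
    (hkq : k ≤ q) {t : ℤ} (h : |t - 2 * Int.fract ((k : ℝ) * √2)| < 2 * pellGap q H) :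
    2 * k = q ∧ 2 * Int.fract ((k : ℝ) * √2) = 1 - pellGap q H := by
  have hfl := Int.floor_add_fract ((k : ℝ) * √2)
  have hf₀ := Int.fract_nonneg ((k : ℝ) * √2)
  have hf₁ := Int.fract_lt_one ((k : ℝ) * √2)
  have hδ₀ := pellGap_pos hqH
  have hδ₃ := pellGap_lt_third hqH (hk.trans_le hkq)
  obtain ⟨htH, hkq₂⟩ := eq_of_abs_sub_lt_two_mul_pellGap hqH (t := t + 2 * ⌊(k : ℝ) * √2⌋) hk hkq
    (by convert h using 2; push_cast; linarith)
  have h2f : 2 * Int.fract ((k : ℝ) * √2) = t - pellGap q H := by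
    have hkqR : 2 * (k : ℝ) = q := by exact_mod_cast hkq₂
    have htHR : (t : ℝ) + 2 * ⌊(k : ℝ) * √2⌋ = H := by exact_mod_cast htH
    unfold pellGap
    linear_combination 2 * hfl - htHR + √2 * hkqR
  -- `t + 2⌊k√2⌋ = H` is odd and `t - δ ∈ [0, 2)`, so `t = 1`
  have ht : t = 1 := by
    obtain ⟨h', hh'⟩ := odd_of_sq_eq_two_mul_sq_add_one hqH
    have ht₀ : (0 : ℤ) < t := by exact_mod_cast (by linarith : (0 : ℝ) < t)
    have ht₃ : t < 3 := by exact_mod_cast (by linarith : (t : ℝ) < 3)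
    omega
  exact ⟨hkq₂, by rw [h2f, ht, Int.cast_one]⟩

theorem pellGap_le_fract (hqH : H ^ 2 = 2 * q ^ 2 + 1) {k : ℕ} (hk : 0 < k) (hkq : k ≤ q) :
    pellGap q H ≤ Int.fract ((k : ℝ) * √2) := by
  have hf₀ := Int.fract_nonneg ((k : ℝ) * √2)
  by_contra! h
  have := (two_mul_fract_eq_of_abs_sub_lt hqH hk hkq (t := 0)
    (by rw [abs_lt]; constructor <;> push_cast <;> linarith)).2
  linarith [pellGap_lt_third hqH (hk.trans_le hkq)]

theorem fract_le_one_sub_pellGap (hqH : H ^ 2 = 2 * q ^ 2 + 1) (hq : 0 < q) {k : ℕ}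
    (hkq : k ≤ q) : Int.fract ((k : ℝ) * √2) ≤ 1 - pellGap q H := by
  have hδ₃ := pellGap_lt_third hqH hq
  rcases Nat.eq_zero_or_pos k with rfl | hk
  · simp only [Nat.cast_zero, zero_mul, Int.fract_zero]
    linarith
  have hf₁ := Int.fract_lt_one ((k : ℝ) * √2)
  by_contra! h
  have := (two_mul_fract_eq_of_abs_sub_lt hqH hk hkq (t := 2)
    (by rw [abs_lt]; constructor <;> push_cast <;> linarith)).2
  linarith

theorem fract_lt_half_of_fract_sub_pellGap_lt (hqH : H ^ 2 = 2 * q ^ 2 + 1) {k : ℕ} (hk : 0 < k)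
    (hkq : k ≤ q) (h : Int.fract ((k : ℝ) * √2) - pellGap q H < 1 / 2) :
    Int.fract ((k : ℝ) * √2) < 1 / 2 := by
  have hδ₀ := pellGap_pos hqH
  by_contra! h'
  have := (two_mul_fract_eq_of_abs_sub_lt hqH hk hkq (t := 1)
    (by rw [abs_lt]; constructor <;> push_cast <;> linarith)).2
  linarith

theorem fract_le_half_sub_pellGap (hqH : H ^ 2 = 2 * q ^ 2 + 1) (hq : 0 < q) {k : ℕ}
    (hkq : k ≤ q) (hkq₂ : 2 * k ≠ q) (h : Int.fract ((k : ℝ) * √2) < 1 / 2) :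
    Int.fract ((k : ℝ) * √2) ≤ 1 / 2 - pellGap q H := by
  have hδ₃ := pellGap_lt_third hqH hq
  rcases Nat.eq_zero_or_pos k with rfl | hk
  · simp only [Nat.cast_zero, zero_mul, Int.fract_zero]
    linarith
  by_contra! h'
  exact hkq₂ (two_mul_fract_eq_of_abs_sub_lt hqH hk hkq (t := 1)
    (by rw [abs_lt]; constructor <;> push_cast <;> linarith)).1

theorem fract_add_eq (hqH : H ^ 2 = 2 * q ^ 2 + 1) {k : ℕ} (hk : 0 < k) (hkq : k ≤ q) :
    Int.fract (((q + k : ℕ) : ℝ) * √2) = Int.fract ((k : ℝ) * √2) - pellGap q H := by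
  have hδ₀ := pellGap_pos hqH
  have hfl := Int.floor_add_fract ((k : ℝ) * √2)
  have hf₁ := Int.fract_lt_one ((k : ℝ) * √2)
  have hf := pellGap_le_fract hqH hk hkq
  rw [Int.fract_eq_iff]
  refine ⟨by linarith, by linarith, H + ⌊(k : ℝ) * √2⌋, ?_⟩
  push_cast
  unfold pellGap
  linarith

theorem fract_sub_eq (hqH : H ^ 2 = 2 * q ^ 2 + 1) (hq : 0 < q) {k : ℕ} (hkq : k ≤ q) :
    Int.fract (((q - k : ℕ) : ℝ) * √2) = 1 - pellGap q H - Int.fract ((k : ℝ) * √2) := by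
  have hδ₀ := pellGap_pos hqH
  have hfl := Int.floor_add_fract ((k : ℝ) * √2)
  have hf₀ := Int.fract_nonneg ((k : ℝ) * √2)
  have hf := fract_le_one_sub_pellGap hqH hq hkq
  rw [Int.fract_eq_iff]
  refine ⟨by linarith, by linarith, H - ⌊(k : ℝ) * √2⌋ - 1, ?_⟩
  push_cast [Nat.cast_sub hkq]
  unfold pellGap
  linarith

theorem fract_half_eq (hqH : H ^ 2 = 2 * q ^ 2 + 1) :
    Int.fract (((q / 2 : ℕ) : ℝ) * √2) = (1 - pellGap q H) / 2 := by
  have hδ₀ := pellGap_pos hqH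
  have hδ := pellGap_mul_add hqH
  have : (0 : ℝ) ≤ q * √2 := by positivity
  have hH : (1 : ℝ) ≤ H := by exact_mod_cast (show 1 ≤ H by nlinarith)
  have hδ₁ : pellGap q H ≤ 1 := by nlinarith
  obtain ⟨c, hc⟩ := even_of_sq_eq_two_mul_sq_add_one hqH
  obtain ⟨h, hh⟩ := odd_of_sq_eq_two_mul_sq_add_one hqH
  rw [Int.fract_eq_iff]
  refine ⟨by linarith, by linarith, h, ?_⟩
  rw [show q / 2 = c by omega]
  have hcR : (q : ℝ) = 2 * c := by exact_mod_cast (by omega : q = 2 * c)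
  have hhR : (H : ℝ) = 2 * h + 1 := by exact_mod_cast hh
  unfold pellGap
  push_cast
  linear_combination (-√2 / 2) * hcR + hhR / 2

theorem fract_add_lt_half_iff (hqH : H ^ 2 = 2 * q ^ 2 + 1) {k : ℕ} (hk : 0 < k) (hkq : k ≤ q) :
    Int.fract (((q + k : ℕ) : ℝ) * √2) < 1 / 2 ↔ Int.fract ((k : ℝ) * √2) < 1 / 2 := by
  rw [fract_add_eq hqH hk hkq]
  exact ⟨fract_lt_half_of_fract_sub_pellGap_lt hqH hk hkq,
    fun h => by linarith [pellGap_pos hqH]⟩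

theorem card_filter_not_fract_lt_half_eq (hqH : H ^ 2 = 2 * q ^ 2 + 1) (hq : 0 < q) :
    #{k ∈ range (q + 1) | ¬ Int.fract (((k : ℕ) : ℝ) * √2) < 1 / 2}
      = #({k ∈ range (q + 1) | Int.fract (((k : ℕ) : ℝ) * √2) < 1 / 2}.erase (q / 2)) := by
  have hδ₀ := pellGap_pos hqH
  obtain ⟨c, hc⟩ := even_of_sq_eq_two_mul_sq_add_one hqH
  refine card_nbij' (q - ·) (q - ·) ?_ ?_ ?_ ?_ <;> intro k hk <;>
    simp only [mem_coe, mem_filter, mem_erase, mem_range] at hk ⊢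
  · refine ⟨fun hk₂ => ?_, by omega, ?_⟩
    · rw [show k = q / 2 by omega, fract_half_eq hqH] at hk
      linarith [hk.2]
    · rw [fract_sub_eq hqH hq (by omega)]
      linarith
  · refine ⟨by omega, ?_⟩
    rw [fract_sub_eq hqH hq (by omega)]
    linarith [fract_le_half_sub_pellGap hqH hq (k := k) (by omega) (by omega) hk.2.2]
  all_goals omega

theorem card_filter_fract_lt_half (hqH : H ^ 2 = 2 * q ^ 2 + 1) (hq : 0 < q) :
    #{k ∈ range (q + 1) | Int.fract (((k : ℕ) : ℝ) * √2) < 1 / 2} = q / 2 + 1 ∧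
      #{k ∈ range (q + 1) | ¬ Int.fract (((k : ℕ) : ℝ) * √2) < 1 / 2} = q / 2 := by
  have hsum := card_filter_add_card_filter_not (s := range (q + 1))
    (fun k : ℕ => Int.fract ((k : ℝ) * √2) < 1 / 2)
  have hhalf : q / 2 ∈ {k ∈ range (q + 1) | Int.fract (((k : ℕ) : ℝ) * √2) < 1 / 2} := by
    rw [mem_filter, mem_range, fract_half_eq hqH]
    exact ⟨by omega, by linarith [pellGap_pos hqH]⟩
  rw [card_filter_not_fract_lt_half_eq hqH hq, card_erase_of_mem hhalf, card_range] at *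
  obtain ⟨c, hc⟩ := even_of_sq_eq_two_mul_sq_add_one hqH
  omega

theorem count_fract_lt_half (hqH : H ^ 2 = 2 * q ^ 2 + 1) (hq : 0 < q) :
    Nat.count (fun k => 0 < k ∧ Int.fract ((k : ℝ) * √2) < 1 / 2) (q + 1) = q / 2 := by
  have hzero : 0 ∈ {k ∈ range (q + 1) | Int.fract (((k : ℕ) : ℝ) * √2) < 1 / 2} := by simp
  rw [Nat.count_eq_card_filter_range, ← Nat.add_sub_cancel (q / 2) 1,
    ← (card_filter_fract_lt_half hqH hq).1, ← card_erase_of_mem hzero]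
  congr 1
  ext k
  simp only [mem_filter, mem_erase, mem_range, Nat.pos_iff_ne_zero]
  tauto

theorem count_half_le_fract (hqH : H ^ 2 = 2 * q ^ 2 + 1) (hq : 0 < q) :
    Nat.count (fun k => 0 < k ∧ 1 / 2 ≤ Int.fract ((k : ℝ) * √2)) (q + 1) = q / 2 := by
  rw [Nat.count_eq_card_filter_range, ← (card_filter_fract_lt_half hqH hq).2]
  congr 1
  refine filter_congr fun k _ => ?_
  rcases Nat.eq_zero_or_pos k with rfl | hk
  · simp
  · simp [hk]

end PellGap

section Nth

variable {p : ℕ → Prop} [DecidablePred p] {q : ℕ}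

theorem count_add_one_add_of_shift (h0 : ¬ p 0)
    (hshift : ∀ k, 0 < k → k ≤ q → (p (q + k) ↔ p k)) {m : ℕ} (hm : m ≤ q) :
    Nat.count p (q + 1 + m) = Nat.count p (q + 1) + Nat.count p (1 + m) := by
  rw [Nat.count_add, Nat.count_add (p := p) 1, Nat.count_one, if_neg h0, zero_add]
  congr 1
  simp only [Nat.count_eq_card_filter_range]
  refine congrArg card (filter_congr fun k hk => ?_)
  rw [mem_range] at hk
  rw [add_assoc]
  exact hshift (1 + k) (by omega) (by omega)

theorem nth_count_add_of_shift (h0 : ¬ p 0)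
    (hshift : ∀ k, 0 < k → k ≤ q → (p (q + k) ↔ p k)) {i : ℕ} (hi : i < Nat.count p (q + 1)) :
    Nat.nth p (Nat.count p (q + 1) + i) = q + Nat.nth p i := by
  have hfin : ∀ hf : (Set.ofPred p).Finite, i < #hf.toFinset :=
    fun hf => hi.trans_le (Nat.count_le_card hf _)
  have hx := Nat.nth_mem i hfin
  have hxq : Nat.nth p i < q + 1 := Nat.nth_lt_of_lt_count hi
  have hx₀ : 0 < Nat.nth p i := Nat.pos_of_ne_zero fun h => h0 (h ▸ hx)
  obtain ⟨m, hm⟩ : ∃ m, Nat.nth p i = 1 + m := ⟨Nat.nth p i - 1, by omega⟩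
  have hcount : Nat.count p (q + Nat.nth p i) = Nat.count p (q + 1) + i := by
    rw [hm, ← add_assoc, count_add_one_add_of_shift h0 hshift (by omega), ← hm,
      Nat.count_nth hfin]
  rw [← hcount, Nat.nth_count]
  exact (hshift _ hx₀ (by omega)).mpr hx

end Nth

theorem stmt_15_general (n : ℕ) (j : ℕ) (hj1 : 1 ≤ j) (hj2 : j ≤ pell (2 * n) / 2) :
    a (pell (2 * n) / 2 + j) = pell (2 * n) + a j ∧
    b (pell (2 * n) / 2 + j) = pell (2 * n) + b j := by
  obtain ⟨H, hqH⟩ := exists_sq_eq_two_mul_pell_sq_add_one n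
  have hq : 0 < pell (2 * n) := by omega
  have hj : j - 1 < pell (2 * n) / 2 := by omega
  unfold a b
  rw [show pell (2 * n) / 2 + j - 1 = pell (2 * n) / 2 + (j - 1) by omega]
  constructor
  · rw [← count_fract_lt_half hqH hq] at hj ⊢
    exact nth_count_add_of_shift (by simp) (fun k hk hkq =>
      and_congr (by omega) (fract_add_lt_half_iff hqH hk hkq)) hj
  · rw [← count_half_le_fract hqH hq] at hj ⊢
    exact nth_count_add_of_shift (by simp) (fun k hk hkq =>
      and_congr (by omega) (by simpa only [not_lt] using (fract_add_lt_half_iff hqH hk hkq).not)) hj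

theorem stmt_15 (n : ℕ) (hn : 1 ≤ n) (j : ℕ) (hj1 : 1 ≤ j) (hj2 : j ≤ pell (2 * n) / 2) :
    a (pell (2 * n) / 2 + j) = pell (2 * n) + a j ∧
    b (pell (2 * n) / 2 + j) = pell (2 * n) + b j :=
  stmt_15_general n j hj1 hj2
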